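/- Let P be a disk pattern in ℂ realizing data (G, Θ) with 0 ≤ Θ ≤ π/2 (so any point of ℂ lies in at most four disks of P). For radii 0 < r_1 < r_2, let V_{c(r_i)} be the set of vertices v with P(v) ∩ c(r_i) ≠ ∅, where c(r) is the circle |z| = r. Then VEL(V_{c(r_1)}, V_{c(r_2)}) ≥ (r_2 − r_1)² / ((32 + (8π)²) r_2²). In particular if r_2 ≥ 2r_1 then VEL ≥ 1/(128 + (16π)²). -/

import Mathlib

open ENNReal Real Metric

variable {V : Type*}

/-- The area of a vertex metric `η`. -/
noncomputable def vArea (η : V → NNReal) : ℝ≥0∞ := ∑' v, (η v : ℝ≥0∞) ^ 2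

/-- A vertex metric is admissible for a family `Γ` of vertex curves if every
curve has `η`-length at least `1`. -/
def Admissible (Γ : Set (Set V)) (η : V → NNReal) : Prop :=
  ∀ γ ∈ Γ, 1 ≤ ∑' v : γ, (η v : ℝ≥0∞)

/-- The vertex modulus of a family of vertex curves. -/
noncomputable def MOD (Γ : Set (Set V)) : ℝ≥0∞ :=
  ⨅ (η : V → NNReal) (_ : Admissible Γ η), vArea η

/-- The vertex extremal length of a family of vertex curves. -/
noncomputable def VEL (Γ : Set (Set V)) : ℝ≥0∞ := (MOD Γ)⁻¹

/-- The family of (vertex sets of) paths in `G` joining `A` and `B`. -/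
def pathsBetween (G : SimpleGraph V) (A B : Set V) : Set (Set V) :=
  {S | ∃ (u v : V) (w : G.Walk u v), u ∈ A ∧ v ∈ B ∧ S = {x | x ∈ w.support}}

/-- The vertex extremal length between two vertex sets. -/
noncomputable def vel (G : SimpleGraph V) (A B : Set V) : ℝ≥0∞ :=
  VEL (pathsBetween G A B)

/-- A disk pattern `v ↦ closedBall (c v) (ρ v)` realizes the data `(G, Θ)`:
adjacent disks intersect with dihedral angle `Θ` (law of cosines) and
non-adjacent disks are disjoint. -/
def RealizesData (G : SimpleGraph V) (Θ : Sym2 V → ℝ) (c : V → ℂ) (ρ : V → ℝ) : Prop :=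
  (∀ v, 0 < ρ v) ∧
  (∀ e ∈ G.edgeSet, Θ e ∈ Set.Icc 0 (π / 2)) ∧
  (∀ u v, G.Adj u v →
    dist (c u) (c v) ^ 2 = ρ u ^ 2 + ρ v ^ 2 + 2 * ρ u * ρ v * Real.cos (Θ s(u, v))) ∧
  (∀ u v, u ≠ v → ¬G.Adj u v →
    Disjoint (closedBall (c u) (ρ u)) (closedBall (c v) (ρ v)))


open MeasureTheory

section DiskPatternAux

variable {V : Type*}

/-- inner product of two complex numbers viewed as vectors in ℝ². -/
noncomputable def ipc (a b : ℂ) : ℝ := a.re * b.re + a.im * b.im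

/-- determinant of two complex numbers viewed as vectors in ℝ². -/
noncomputable def dtc (a b : ℂ) : ℝ := a.re * b.im - a.im * b.re

/-- sign map. -/
noncomputable def sgnc (x : ℝ) : ℤ := if 0 < x then 1 else if x < 0 then -1 else 0

lemma lagrange (a b c : ℂ) :
    ipc b c * ipc a a = ipc a b * ipc a c + dtc a b * dtc a c := by
  simp only [ipc, dtc]; ring

lemma sgnc_pos {x : ℝ} (h : 0 < x) : sgnc x = 1 := by simp [sgnc, h]
lemma sgnc_neg {x : ℝ} (h : x < 0) : sgnc x = -1 := by simp [sgnc, h, asymm h]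
lemma sgnc_zero {x : ℝ} (h : x = 0) : sgnc x = 0 := by simp [sgnc, h]

lemma lagrange_self (a b : ℂ) :
    ipc a b ^ 2 + dtc a b ^ 2 = ipc a a * ipc b b := by
  simp only [ipc, dtc]; ring


lemma overlap_le_four (c : V → ℂ) (ρ : V → ℝ) (hρ : ∀ v, 0 < ρ v)
    (z : ℂ)
    (hkey : ∀ u v : V, u ≠ v → z ∈ closedBall (c u) (ρ u) → z ∈ closedBall (c v) (ρ v) →
      ρ u ^ 2 + ρ v ^ 2 ≤ dist (c u) (c v) ^ 2)
    (S : Finset V) (hmem : ∀ v ∈ S, z ∈ closedBall (c v) (ρ v)) :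
    S.card ≤ 4 := by
  classical
  rcases S.eq_empty_or_nonempty with h | ⟨v₀, hv₀⟩
  · simp [h]
  -- basic facts about the vectors w v = c v - z
  set w : V → ℂ := fun v => c v - z with hw
  have hzne : ∀ u v, u ∈ S → v ∈ S → u ≠ v → z ≠ c u := by
    intro u v hu hv huv hz
    have h1 := hkey u v huv (hmem u hu) (hmem v hv)
    have h2 : dist (c u) (c v) ≤ ρ v := by
      rw [← hz]; exact mem_closedBall.1 (hmem v hv)
    have h3 : 0 < ρ u := hρ u
    have h4 : 0 ≤ dist (c u) (c v) := dist_nonneg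
    nlinarith
  have hipself : ∀ v, ipc (w v) (w v) = dist z (c v) ^ 2 := by
    intro v
    rw [dist_comm, Complex.dist_eq, Complex.sq_norm]
    simp only [ipc, Complex.normSq_apply, hw, Complex.sub_re, Complex.sub_im]
  have hpos : ∀ u v, u ∈ S → v ∈ S → u ≠ v → 0 < ipc (w u) (w u) := by
    intro u v hu hv huv
    rw [hipself]
    rw [dist_comm]
    exact pow_pos (dist_pos.2 (Ne.symm (hzne u v hu hv huv))) 2
  have hip : ∀ u v, u ∈ S → v ∈ S → u ≠ v → ipc (w u) (w v) ≤ 0 := by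
    intro u v hu hv huv
    have h1 := hkey u v huv (hmem u hu) (hmem v hv)
    have h2 : dist z (c u) ^ 2 ≤ ρ u ^ 2 := by
      have := mem_closedBall.1 (hmem u hu)
      nlinarith [dist_nonneg (x := z) (y := c u)]
    have h3 : dist z (c v) ^ 2 ≤ ρ v ^ 2 := by
      have := mem_closedBall.1 (hmem v hv)
      nlinarith [dist_nonneg (x := z) (y := c v)]
    have h4 : dist (c u) (c v) ^ 2 =
        ipc (w u) (w u) + ipc (w v) (w v) - 2 * ipc (w u) (w v) := by
      rw [Complex.dist_eq, Complex.sq_norm]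
      simp only [ipc, Complex.normSq_apply, hw, Complex.sub_re, Complex.sub_im]
      ring
    simp only [hipself] at h4
    linarith
  -- map each vertex in S.erase v₀ to the sign of the determinant with w v₀
  have hcard : (S.erase v₀).card ≤ ({-1, 0, 1} : Finset ℤ).card := by
    apply Finset.card_le_card_of_injOn (fun v => sgnc (dtc (w v₀) (w v)))
    · intro v _
      simp only [Finset.mem_insert, Finset.mem_singleton, sgnc]
      split_ifs <;> simp
    · intro u hu v hv huv
      by_contra hne
      have hu' : u ∈ S := Finset.mem_of_mem_erase hu
      have hv' : v ∈ S := Finset.mem_of_mem_erase hv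
      have huv0 : u ≠ v₀ := Finset.ne_of_mem_erase hu
      have hvv0 : v ≠ v₀ := Finset.ne_of_mem_erase hv
      have h0u : ipc (w v₀) (w u) ≤ 0 := hip v₀ u hv₀ hu' (Ne.symm huv0)
      have h0v : ipc (w v₀) (w v) ≤ 0 := hip v₀ v hv₀ hv' (Ne.symm hvv0)
      have huvip : ipc (w u) (w v) ≤ 0 := hip u v hu' hv' hne
      have h00 : 0 < ipc (w v₀) (w v₀) := hpos v₀ u hv₀ hu' (Ne.symm huv0)
      have hupos : 0 < ipc (w u) (w u) := hpos u v₀ hu' hv₀ huv0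
      have hvpos : 0 < ipc (w v) (w v) := hpos v v₀ hv' hv₀ hvv0
      have hid := lagrange (w v₀) (w u) (w v)
      have hlu := lagrange_self (w v₀) (w u)
      have hlv := lagrange_self (w v₀) (w v)
      -- same sign leads to contradiction
      set bu := dtc (w v₀) (w u) with hbu
      set bv := dtc (w v₀) (w v) with hbv
      dsimp only at huv
      rcases lt_trichotomy bu 0 with hb1 | hb1 | hb1 <;>
        rcases lt_trichotomy bv 0 with hb2 | hb2 | hb2
      · nlinarith
      · rw [← hbu, ← hbv, sgnc_neg hb1, sgnc_zero hb2] at huv; exact absurd huv (by decide)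
      · rw [← hbu, ← hbv, sgnc_neg hb1, sgnc_pos hb2] at huv; exact absurd huv (by decide)
      · rw [← hbu, ← hbv, sgnc_zero hb1, sgnc_neg hb2] at huv; exact absurd huv (by decide)
      · rw [hb1] at hlu hid
        rw [hb2] at hlv hid
        have hA : ipc (w v₀) (w u) < 0 := by
          rcases lt_or_eq_of_le h0u with h | h
          · exact h
          · exfalso; rw [← h] at hlu; nlinarith [mul_pos h00 hupos]
        have hB : ipc (w v₀) (w v) < 0 := by
          rcases lt_or_eq_of_le h0v with h | h
          · exact h
          · exfalso; rw [← h] at hlv; nlinarith [mul_pos h00 hvpos]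
        nlinarith [mul_pos (neg_pos.2 hA) (neg_pos.2 hB),
          mul_nonpos_iff.2 (Or.inr ⟨huvip, h00.le⟩)]
      · rw [← hbu, ← hbv, sgnc_zero hb1, sgnc_pos hb2] at huv; exact absurd huv (by decide)
      · rw [← hbu, ← hbv, sgnc_pos hb1, sgnc_neg hb2] at huv; exact absurd huv (by decide)
      · rw [← hbu, ← hbv, sgnc_pos hb1, sgnc_zero hb2] at huv; exact absurd huv (by decide)
      · nlinarith
  have : S.card ≤ 4 := by
    have h1 := Finset.card_erase_add_one hv₀
    have h2 : ({-1, 0, 1} : Finset ℤ).card ≤ 3 := by decide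
    omega
  exact this

lemma sum_volume_le (c : V → ℂ) (ρ : V → ℝ)
    (hcard : ∀ (z : ℂ) (S : Finset V), (∀ v ∈ S, z ∈ closedBall (c v) (ρ v)) → S.card ≤ 4)
    (R : ℝ) (F : Finset V) :
    ∑ v ∈ F, volume (closedBall (c v) (ρ v) ∩ closedBall (0 : ℂ) R) ≤
      4 * volume (closedBall (0 : ℂ) R) := by
  classical
  have h1 : ∀ v : V, volume (closedBall (c v) (ρ v) ∩ closedBall (0 : ℂ) R) =
      ∫⁻ z in closedBall (0 : ℂ) R, (closedBall (c v) (ρ v)).indicator (fun _ => 1) z := by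
    intro v
    rw [lintegral_indicator measurableSet_closedBall, setLIntegral_one,
      Measure.restrict_apply measurableSet_closedBall]
  calc ∑ v ∈ F, volume (closedBall (c v) (ρ v) ∩ closedBall (0 : ℂ) R)
      = ∫⁻ z in closedBall (0 : ℂ) R,
          ∑ v ∈ F, (closedBall (c v) (ρ v)).indicator (fun _ => 1) z := by
        rw [lintegral_finset_sum]
        · simp_rw [h1]
        · exact fun v _ => (measurable_const.indicator measurableSet_closedBall)
    _ ≤ ∫⁻ _ in closedBall (0 : ℂ) R, (4 : ℝ≥0∞) := by
        apply lintegral_mono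
        intro z
        have he : ∑ v ∈ F, (closedBall (c v) (ρ v)).indicator (fun _ => (1:ℝ≥0∞)) z =
            ((F.filter (fun v => z ∈ closedBall (c v) (ρ v))).card : ℝ≥0∞) := by
          rw [Finset.card_filter]
          push_cast
          simp [Set.indicator_apply]
        simp only []
        rw [he]
        have := hcard z (F.filter (fun v => z ∈ closedBall (c v) (ρ v)))
          (fun v hv => (Finset.mem_filter.1 hv).2)
        exact_mod_cast Nat.cast_le.2 this
    _ = 4 * volume (closedBall (0 : ℂ) R) := setLIntegral_const _ _

lemma vol_cb (a : ℂ) {r : ℝ} (h : 0 ≤ r) :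
    (volume (closedBall a r)).toReal = r ^ 2 * π := by
  rw [Complex.volume_closedBall, ENNReal.toReal_mul, ENNReal.toReal_pow,
    ENNReal.toReal_ofReal h]
  norm_num [NNReal.coe_real_pi]

lemma dsq_le (c₀ : ℂ) (ρ₀ r₂ : ℝ) (hρ : 0 < ρ₀) (hr₂ : 0 < r₂) :
    diam (closedBall c₀ ρ₀ ∩ closedBall (0 : ℂ) r₂) ^ 2 * π ≤
      16 * (volume (closedBall c₀ ρ₀ ∩ closedBall (0 : ℂ) (3 * r₂))).toReal := by
  rcases Set.eq_empty_or_nonempty (closedBall c₀ ρ₀ ∩ closedBall (0 : ℂ) r₂) with h | ⟨p, hp⟩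
  · rw [h, diam_empty]
    simp
  have hp1 : dist p c₀ ≤ ρ₀ := mem_closedBall.1 hp.1
  have hp2 : dist p 0 ≤ r₂ := mem_closedBall.1 hp.2
  have hfin : volume (closedBall c₀ ρ₀ ∩ closedBall (0 : ℂ) (3 * r₂)) ≠ ⊤ :=
    ((measure_mono Set.inter_subset_right).trans_lt measure_closedBall_lt_top).ne
  rcases le_or_gt ρ₀ r₂ with hcase | hcase
  · -- small disk: entirely inside closedBall 0 (3 r₂)
    have hsub : closedBall c₀ ρ₀ ⊆ closedBall (0 : ℂ) (3 * r₂) := by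
      apply closedBall_subset_closedBall'
      have h3 : dist c₀ 0 ≤ dist c₀ p + dist p 0 := dist_triangle _ _ _
      rw [dist_comm c₀ p] at h3
      linarith
    rw [Set.inter_eq_left.2 hsub, vol_cb _ hρ.le]
    have hd : diam (closedBall c₀ ρ₀ ∩ closedBall (0 : ℂ) r₂) ≤ 2 * ρ₀ :=
      le_trans (diam_mono Set.inter_subset_left isBounded_closedBall) (diam_closedBall hρ.le)
    have hd0 : 0 ≤ diam (closedBall c₀ ρ₀ ∩ closedBall (0 : ℂ) r₂) := diam_nonneg
    nlinarith [pi_pos, mul_self_le_mul_self hd0 hd]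
  · -- big disk
    set d := dist p c₀ with hdd
    set t : ℝ := r₂ / (2 * d) with ht
    set q : ℂ := if d ≤ r₂ / 2 then c₀ else p + t • (c₀ - p) with hq
    have hAB : r₂ / 2 + dist q c₀ ≤ ρ₀ ∧ r₂ / 2 + dist q 0 ≤ 3 * r₂ := by
      rw [hq]
      split_ifs with h
      · refine ⟨by simp; linarith, ?_⟩
        have h3 : dist c₀ 0 ≤ dist c₀ p + dist p 0 := dist_triangle _ _ _
        rw [dist_comm c₀ p] at h3
        linarith
      · push_neg at h
        have hd0 : 0 < d := lt_trans (by positivity) h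
        have htd : t * d = r₂ / 2 := by rw [ht]; field_simp
        have ht1 : t ≤ 1 := by rw [ht, div_le_one (by positivity)]; linarith
        have ht0 : 0 ≤ t := by positivity
        have e1 : p + t • (c₀ - p) - c₀ = ((1 : ℝ) - t) • (p - c₀) := by
          simp only [Complex.real_smul, Complex.ofReal_sub, Complex.ofReal_one]
          ring
        have e2 : dist (p + t • (c₀ - p)) c₀ = (1 - t) * d := by
          rw [dist_eq_norm, e1, norm_smul, Real.norm_eq_abs, abs_of_nonneg (by linarith)]
          rw [← dist_eq_norm]
        have e3 : dist (p + t • (c₀ - p)) p = r₂ / 2 := by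
          rw [dist_eq_norm, add_sub_cancel_left, norm_smul, Real.norm_eq_abs,
            abs_of_nonneg ht0, ← dist_eq_norm, dist_comm c₀ p, ← hdd, htd]
        constructor
        · rw [e2]; nlinarith
        · have h4 : dist (p + t • (c₀ - p)) 0 ≤ dist (p + t • (c₀ - p)) p + dist p 0 :=
            dist_triangle _ _ _
          rw [e3] at h4
          linarith
    have hsub : closedBall q (r₂ / 2) ⊆ closedBall c₀ ρ₀ ∩ closedBall (0 : ℂ) (3 * r₂) :=
      Set.subset_inter (closedBall_subset_closedBall' hAB.1) (closedBall_subset_closedBall' hAB.2)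
    have hv : (r₂ / 2) ^ 2 * π ≤
        (volume (closedBall c₀ ρ₀ ∩ closedBall (0 : ℂ) (3 * r₂))).toReal := by
      rw [← vol_cb q (by positivity : (0:ℝ) ≤ r₂ / 2)]
      exact ENNReal.toReal_mono hfin (measure_mono hsub)
    have hd : diam (closedBall c₀ ρ₀ ∩ closedBall (0 : ℂ) r₂) ≤ 2 * r₂ :=
      le_trans (diam_mono Set.inter_subset_right isBounded_closedBall) (diam_closedBall hr₂.le)
    have hd0 : 0 ≤ diam (closedBall c₀ ρ₀ ∩ closedBall (0 : ℂ) r₂) := diam_nonneg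
    nlinarith [pi_pos, mul_self_le_mul_self hd0 hd, hv]

noncomputable def clipR (r : ℝ) (z : ℂ) : ℝ := min ‖z‖ r


lemma clip_step (c₀ : ℂ) (ρ₀ r₂ : ℝ) (hr₂ : 0 ≤ r₂) (a b : ℂ)
    (ha : a ∈ closedBall c₀ ρ₀) (hb : b ∈ closedBall c₀ ρ₀) :
    clipR r₂ b - clipR r₂ a ≤ diam (closedBall c₀ ρ₀ ∩ closedBall (0 : ℂ) r₂) := by
  have hbd : Bornology.IsBounded (closedBall c₀ ρ₀ ∩ closedBall (0 : ℂ) r₂) :=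
    isBounded_closedBall.subset Set.inter_subset_right
  have hd0 : 0 ≤ diam (closedBall c₀ ρ₀ ∩ closedBall (0 : ℂ) r₂) := diam_nonneg
  rcases le_or_gt r₂ ‖a‖ with hA | hA
  · have h1 : clipR r₂ a = r₂ := min_eq_right hA
    have h2 : clipR r₂ b ≤ r₂ := min_le_right _ _
    linarith
  · have haB : a ∈ closedBall (0 : ℂ) r₂ := by
      simpa [mem_closedBall, dist_zero_right] using hA.le
    have hca : clipR r₂ a = ‖a‖ := min_eq_left hA.le
    rcases le_or_gt ‖b‖ r₂ with hB | hB
    · have hbB : b ∈ closedBall (0 : ℂ) r₂ := by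
        simpa [mem_closedBall, dist_zero_right] using hB
      have : clipR r₂ b - clipR r₂ a ≤ ‖b‖ - ‖a‖ := by
        rw [hca, clipR, min_eq_left hB]
      refine this.trans ?_
      calc ‖b‖ - ‖a‖ ≤ ‖b - a‖ := by
            have := norm_sub_norm_le b a
            linarith
        _ = dist b a := (dist_eq_norm _ _).symm
        _ ≤ diam _ := dist_le_diam_of_mem hbd ⟨hb, hbB⟩ ⟨ha, haB⟩
    · -- a inside, b outside: use intermediate value
      have hcont : ContinuousOn (fun tt : ℝ => ‖(1 - tt) • a + tt • b‖) (Set.Icc 0 1) := by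
        fun_prop
      have hIV := intermediate_value_Icc (by norm_num : (0:ℝ) ≤ 1) hcont
      have hr₂mem : r₂ ∈ Set.Icc (‖(1 - (0:ℝ)) • a + (0:ℝ) • b‖) (‖(1 - (1:ℝ)) • a + (1:ℝ) • b‖) := by
        simp only [sub_zero, one_smul, zero_smul, add_zero, sub_self, zero_add]
        exact ⟨hA.le, hB.le⟩
      obtain ⟨tt, htt, hx⟩ := hIV hr₂mem
      set x : ℂ := (1 - tt) • a + tt • b with hxdef
      have hxn : ‖x‖ = r₂ := hx
      have hxP : x ∈ closedBall c₀ ρ₀ :=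
        (convex_closedBall c₀ ρ₀) ha hb (by linarith [htt.2]) htt.1 (by ring)
      have hxB : x ∈ closedBall (0 : ℂ) r₂ := by
        simp [mem_closedBall, dist_zero_right, hxn]
      have h1 : clipR r₂ b = r₂ := min_eq_right hB.le
      calc clipR r₂ b - clipR r₂ a = r₂ - ‖a‖ := by rw [h1, hca]
        _ = ‖x‖ - ‖a‖ := by rw [hxn]
        _ ≤ ‖x - a‖ := by have := norm_sub_norm_le x a; linarith
        _ = dist x a := (dist_eq_norm _ _).symm
        _ ≤ diam _ := dist_le_diam_of_mem hbd ⟨hxP, hxB⟩ ⟨ha, haB⟩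

lemma adj_inter_nonempty (c : V → ℂ) (ρ : V → ℝ) (hρ : ∀ v, 0 < ρ v) {u x : V}
    (hd : dist (c u) (c x) ≤ ρ u + ρ x) :
    ∃ m : ℂ, m ∈ closedBall (c u) (ρ u) ∧ m ∈ closedBall (c x) (ρ x) := by
  set s : ℝ := ρ u + ρ x with hs
  have hs0 : 0 < s := by have := hρ u; have := hρ x; linarith
  refine ⟨c u + (ρ u / s) • (c x - c u), ?_, ?_⟩
  · rw [mem_closedBall, dist_eq_norm, add_sub_cancel_left, norm_smul, Real.norm_eq_abs,
      abs_of_nonneg (div_pos (hρ u) hs0).le, ← dist_eq_norm, dist_comm (c x) (c u)]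
    rw [div_mul_eq_mul_div, div_le_iff₀ hs0]
    nlinarith [hρ u, dist_nonneg (x := c u) (y := c x)]
  · rw [mem_closedBall, dist_eq_norm]
    have e : c u + (ρ u / s) • (c x - c u) - c x = -(((ρ x / s) : ℝ) • (c x - c u)) := by
      simp only [Complex.real_smul]
      push_cast
      have : (s : ℂ) ≠ 0 := by exact_mod_cast hs0.ne'
      field_simp
      rw [Complex.ofReal_add]
      ring
    rw [e, norm_neg, norm_smul, Real.norm_eq_abs, abs_of_nonneg (div_pos (hρ x) hs0).le,
      ← dist_eq_norm, dist_comm (c x) (c u)]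
    rw [div_mul_eq_mul_div, div_le_iff₀ hs0]
    nlinarith [hρ x, dist_nonneg (x := c u) (y := c x)]

lemma walk_clip_sum (G : SimpleGraph V) (c : V → ℂ) (ρ : V → ℝ) (hρ : ∀ v, 0 < ρ v)
    (hadj : ∀ u v, G.Adj u v → dist (c u) (c v) ≤ ρ u + ρ v)
    (r₂ : ℝ) (hr₂ : 0 ≤ r₂) {u v : V} (w : G.Walk u v) (a b : ℂ)
    (ha : a ∈ closedBall (c u) (ρ u)) (hb : b ∈ closedBall (c v) (ρ v)) :
    clipR r₂ b - clipR r₂ a ≤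
      (w.support.map (fun x => diam (closedBall (c x) (ρ x) ∩ closedBall (0 : ℂ) r₂))).sum := by
  induction w generalizing a b with
  | nil =>
    simpa using clip_step _ _ _ hr₂ a b ha hb
  | @cons u x v hadj' q ih =>
    obtain ⟨m, hm1, hm2⟩ := adj_inter_nonempty c ρ hρ (hadj _ _ hadj')
    have h1 := clip_step (c u) (ρ u) r₂ hr₂ a m ha hm1
    have h2 := ih m b hm2 hb
    rw [SimpleGraph.Walk.support_cons, List.map_cons, List.sum_cons]
    linarith

end DiskPatternAux

/-- Lower bound for the vertex extremal length between the sets of vertices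
whose disks meet the circles `|z| = r₁` and `|z| = r₂`. -/
theorem stmt10 (G : SimpleGraph V) (Θ : Sym2 V → ℝ) (c : V → ℂ) (ρ : V → ℝ)
    (hP : RealizesData G Θ c ρ) (r₁ r₂ : ℝ) (h₁ : 0 < r₁) (h₁₂ : r₁ < r₂) :
    ENNReal.ofReal ((r₂ - r₁) ^ 2 / ((32 + (8 * π) ^ 2) * r₂ ^ 2)) ≤
        vel G {v | (closedBall (c v) (ρ v) ∩ sphere (0 : ℂ) r₁).Nonempty}
          {v | (closedBall (c v) (ρ v) ∩ sphere (0 : ℂ) r₂).Nonempty} ∧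
      (2 * r₁ ≤ r₂ →
        ENNReal.ofReal (1 / (128 + (16 * π) ^ 2)) ≤
          vel G {v | (closedBall (c v) (ρ v) ∩ sphere (0 : ℂ) r₁).Nonempty}
            {v | (closedBall (c v) (ρ v) ∩ sphere (0 : ℂ) r₂).Nonempty}) := by
  classical
  obtain ⟨hρ, hΘ, hlaw, hdisj⟩ := hP
  have hr₂ : 0 < r₂ := h₁.trans h₁₂
  have hr21 : 0 < r₂ - r₁ := by linarith
  -- the metric
  set f : V → ℝ := fun v => diam (closedBall (c v) (ρ v) ∩ closedBall (0 : ℂ) r₂) with hf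
  have hf0 : ∀ v, 0 ≤ f v := fun v => diam_nonneg
  set η : V → NNReal := fun v => Real.toNNReal (f v / (r₂ - r₁)) with hη
  have hcoe : ∀ v, ((η v : NNReal) : ℝ≥0∞) = ENNReal.ofReal (f v / (r₂ - r₁)) := fun v => rfl
  -- adjacency gives touching disks
  have hadj : ∀ u v, G.Adj u v → dist (c u) (c v) ≤ ρ u + ρ v := by
    intro u v h
    have h1 := hlaw u v h
    have h2 := Real.cos_le_one (Θ s(u, v))
    have h3 := hρ u; have h4 := hρ v
    have h5 : dist (c u) (c v) ^ 2 ≤ (ρ u + ρ v) ^ 2 := by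
      nlinarith [mul_le_mul_of_nonneg_left h2 (by positivity : (0:ℝ) ≤ 2 * ρ u * ρ v)]
    exact (pow_le_pow_iff_left₀ dist_nonneg (by positivity) two_ne_zero).1 h5
  -- key quadratic inequality for overlapping disks
  have hkey : ∀ (z : ℂ) (u v : V), u ≠ v → z ∈ closedBall (c u) (ρ u) →
      z ∈ closedBall (c v) (ρ v) → ρ u ^ 2 + ρ v ^ 2 ≤ dist (c u) (c v) ^ 2 := by
    intro z u v huv hzu hzv
    by_cases h : G.Adj u v
    · have h1 := hlaw u v h
      have h2 := hΘ s(u, v) ((SimpleGraph.mem_edgeSet G).2 h)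
      have h3 : 0 ≤ Real.cos (Θ s(u, v)) := by
        apply Real.cos_nonneg_of_mem_Icc
        constructor
        · linarith [h2.1, pi_pos]
        · exact h2.2
      have h4 := hρ u; have h5 := hρ v
      have h6 : 0 ≤ 2 * ρ u * ρ v * Real.cos (Θ s(u, v)) :=
        mul_nonneg (by positivity) h3
      linarith
    · exact absurd hzv (Set.disjoint_left.1 (hdisj u v huv h) hzu)
  have hcard : ∀ (z : ℂ) (S : Finset V), (∀ v ∈ S, z ∈ closedBall (c v) (ρ v)) → S.card ≤ 4 :=
    fun z S hS => overlap_le_four c ρ hρ z (fun u v h h1 h2 => hkey z u v h h1 h2) S hS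
  -- area of the metric: finite sums of f² are bounded
  have hsum : ∀ F : Finset V, ∑ v ∈ F, f v ^ 2 ≤ (32 + (8 * π) ^ 2) * r₂ ^ 2 := by
    intro F
    have h1 : ∑ v ∈ F, f v ^ 2 * π ≤
        ∑ v ∈ F, 16 * (volume (closedBall (c v) (ρ v) ∩ closedBall (0 : ℂ) (3 * r₂))).toReal :=
      Finset.sum_le_sum fun v _ => dsq_le (c v) (ρ v) r₂ (hρ v) hr₂
    have h2 : ∑ v ∈ F, (volume (closedBall (c v) (ρ v) ∩ closedBall (0 : ℂ) (3 * r₂))).toReal ≤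
        4 * ((3 * r₂) ^ 2 * π) := by
      have h3 := sum_volume_le c ρ hcard (3 * r₂) F
      have h4 : (volume (closedBall (0 : ℂ) (3 * r₂))) ≠ ⊤ := measure_closedBall_lt_top.ne
      have h5 : (4 * volume (closedBall (0 : ℂ) (3 * r₂))) ≠ ⊤ := by
        exact ENNReal.mul_ne_top (by norm_num) h4
      have h6 := ENNReal.toReal_mono h5 h3
      rw [ENNReal.toReal_sum (fun v _ => ((measure_mono Set.inter_subset_right).trans_lt
        measure_closedBall_lt_top).ne)] at h6
      rw [ENNReal.toReal_mul, vol_cb _ (by positivity : (0:ℝ) ≤ 3 * r₂)] at h6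
      simpa using h6
    have hππ : 0 < π := pi_pos
    have h7 : ∑ v ∈ F, f v ^ 2 * π = (∑ v ∈ F, f v ^ 2) * π := by rw [Finset.sum_mul]
    have h8 : ∑ v ∈ F, 16 * (volume (closedBall (c v) (ρ v) ∩
        closedBall (0 : ℂ) (3 * r₂))).toReal = 16 * ∑ v ∈ F,
        (volume (closedBall (c v) (ρ v) ∩ closedBall (0 : ℂ) (3 * r₂))).toReal := by
      rw [Finset.mul_sum]
    rw [h7] at h1; rw [h8] at h1
    have h9 : (∑ v ∈ F, f v ^ 2) * π ≤ 576 * r₂ ^ 2 * π := by nlinarith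
    have h10 : ∑ v ∈ F, f v ^ 2 ≤ 576 * r₂ ^ 2 := le_of_mul_le_mul_right (by nlinarith) hππ
    have hpi2 : (9 : ℝ) ≤ π ^ 2 := by nlinarith [pi_gt_three, sq_nonneg (π - 3)]
    nlinarith [h10, mul_le_mul_of_nonneg_right hpi2 (sq_nonneg r₂), sq_nonneg r₂]
  -- admissibility
  have hadm : Admissible (pathsBetween G
      {v | (closedBall (c v) (ρ v) ∩ sphere (0 : ℂ) r₁).Nonempty}
      {v | (closedBall (c v) (ρ v) ∩ sphere (0 : ℂ) r₂).Nonempty}) η := by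
    rintro γ ⟨u, v, w, hu, hv, rfl⟩
    obtain ⟨a, haP, haS⟩ := hu
    obtain ⟨b, hbP, hbS⟩ := hv
    have haN : ‖a‖ = r₁ := by simpa [mem_sphere_iff_norm] using haS
    have hbN : ‖b‖ = r₂ := by simpa [mem_sphere_iff_norm] using hbS
    set p := w.bypass with hp
    have hnodup : p.support.Nodup := w.bypass_isPath.support_nodup
    -- the real inequality along the path
    have hkey2 : r₂ - r₁ ≤ (p.support.map f).sum := by
      have := walk_clip_sum G c ρ hρ hadj r₂ hr₂.le p a b haP hbP
      rw [clipR, clipR, haN, hbN, min_self, min_eq_left h₁₂.le] at this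
      exact this
    have hkey3 : r₂ - r₁ ≤ ∑ x ∈ p.support.toFinset, f x := by
      rwa [List.sum_toFinset _ hnodup]
    have hsub : p.support.toFinset ⊆ w.support.toFinset := by
      intro x hx
      rw [List.mem_toFinset] at hx ⊢
      exact w.support_bypass_subset hx
    have hkey4 : r₂ - r₁ ≤ ∑ x ∈ w.support.toFinset, f x :=
      hkey3.trans (Finset.sum_le_sum_of_subset_of_nonneg hsub (fun x _ _ => hf0 x))
    have hγ : {x | x ∈ w.support} = (↑(w.support.toFinset) : Set V) := by
      ext x; simp
    rw [hγ, Finset.tsum_subtype' (w.support.toFinset) (fun x => ((η x : NNReal) : ℝ≥0∞))]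
    have : ∑ x ∈ w.support.toFinset, ((η x : NNReal) : ℝ≥0∞) =
        ENNReal.ofReal (∑ x ∈ w.support.toFinset, f x / (r₂ - r₁)) := by
      rw [ENNReal.ofReal_sum_of_nonneg (fun x _ => by positivity)]
      exact Finset.sum_congr rfl fun x _ => hcoe x
    rw [this, show (1 : ℝ≥0∞) = ENNReal.ofReal 1 by simp]
    apply ENNReal.ofReal_le_ofReal
    rw [← Finset.sum_div, le_div_iff₀ hr21]
    linarith
  -- area bound
  have harea : vArea η ≤ ENNReal.ofReal ((32 + (8 * π) ^ 2) * r₂ ^ 2 / (r₂ - r₁) ^ 2) := by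
    rw [vArea, ENNReal.tsum_eq_iSup_sum]
    apply iSup_le
    intro F
    have h1 : ∑ v ∈ F, ((η v : NNReal) : ℝ≥0∞) ^ 2 =
        ENNReal.ofReal (∑ v ∈ F, (f v / (r₂ - r₁)) ^ 2) := by
      rw [ENNReal.ofReal_sum_of_nonneg (fun v _ => by positivity)]
      refine Finset.sum_congr rfl fun v _ => ?_
      rw [hcoe, ← ENNReal.ofReal_pow (by positivity)]
    rw [h1]
    apply ENNReal.ofReal_le_ofReal
    have h2 : ∑ v ∈ F, (f v / (r₂ - r₁)) ^ 2 = (∑ v ∈ F, f v ^ 2) / (r₂ - r₁) ^ 2 := by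
      rw [Finset.sum_div]
      exact Finset.sum_congr rfl fun v _ => by rw [div_pow]
    rw [h2]
    gcongr
    exact hsum F
  -- conclusion
  have hMOD : MOD (pathsBetween G
      {v | (closedBall (c v) (ρ v) ∩ sphere (0 : ℂ) r₁).Nonempty}
      {v | (closedBall (c v) (ρ v) ∩ sphere (0 : ℂ) r₂).Nonempty}) ≤
      ENNReal.ofReal ((32 + (8 * π) ^ 2) * r₂ ^ 2 / (r₂ - r₁) ^ 2) := by
    refine le_trans ?_ harea
    exact iInf_le_of_le η (iInf_le_of_le hadm le_rfl)
  have hb0 : (0 : ℝ) < (32 + (8 * π) ^ 2) * r₂ ^ 2 / (r₂ - r₁) ^ 2 := by positivity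
  have hvel : ENNReal.ofReal ((r₂ - r₁) ^ 2 / ((32 + (8 * π) ^ 2) * r₂ ^ 2)) ≤
      vel G {v | (closedBall (c v) (ρ v) ∩ sphere (0 : ℂ) r₁).Nonempty}
        {v | (closedBall (c v) (ρ v) ∩ sphere (0 : ℂ) r₂).Nonempty} := by
    rw [vel, VEL]
    calc ENNReal.ofReal ((r₂ - r₁) ^ 2 / ((32 + (8 * π) ^ 2) * r₂ ^ 2))
        = (ENNReal.ofReal ((32 + (8 * π) ^ 2) * r₂ ^ 2 / (r₂ - r₁) ^ 2))⁻¹ := by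
          rw [← ENNReal.ofReal_inv_of_pos hb0, inv_div]
      _ ≤ _ := ENNReal.inv_le_inv' hMOD
  refine ⟨hvel, fun h2 => le_trans ?_ hvel⟩
  apply ENNReal.ofReal_le_ofReal
  rw [div_le_div_iff₀ (by positivity) (by positivity)]
  have h3 : (r₂ / 2) ^ 2 ≤ (r₂ - r₁) ^ 2 := by nlinarith
  nlinarith [pi_pos, sq_nonneg π, mul_le_mul_of_nonneg_right h3
    (by positivity : (0:ℝ) ≤ 128 + (16 * π) ^ 2)]
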